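/- arXiv:1904.05566 — 8 statements merged into one kernel-verified Lean document; each statement's English description precedes it below -/
import Mathlib

section
/- Let a be a real number and A := -((1/2 + i a)/(1/2 - i a)). Then the sum ∑_{ℓ=0}^{2n} A^ℓ equals zero if and only if Re((1/2 + i a)^{2n+1}) = 0. -/
/-!
Write `z = 1/2 + i a`, so that `A = -z / z̄` with `A ≠ 1` (as `Re z ≠ 0`). The geometric sum of
odd length `m = 2n + 1` vanishes iff `A ^ m = 1`, i.e. iff `z ^ m / z̄ ^ m = -1`, i.e. iff
`z ^ m = -conj (z ^ m)`, which says exactly that `Re (z ^ m) = 0`.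
-/

open ComplexConjugate

theorem geom_sum_eq_zero_iff_pow_eq_one {K : Type*} [DivisionRing K] {x : K} (hx : x ≠ 1) (m : ℕ) :
    ∑ i ∈ Finset.range m, x ^ i = 0 ↔ x ^ m = 1 := by
  rw [geom_sum_eq hx, div_eq_zero_iff, sub_eq_zero, sub_eq_zero, or_iff_left hx]

theorem Complex.div_conj_eq_neg_one_iff {w : ℂ} (hw : w ≠ 0) : w / conj w = -1 ↔ w.re = 0 := by
  rw [div_eq_iff ((map_ne_zero _).mpr hw), neg_one_mul, ← add_eq_zero_iff_eq_neg, add_conj]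
  norm_num

theorem Odd.neg_div_conj_pow {m : ℕ} (hm : Odd m) (w : ℂ) :
    (-(w / conj w)) ^ m = -(w ^ m / conj (w ^ m)) := by
  rw [hm.neg_pow, div_pow, map_pow]

theorem geom_sum_zero_iff_re_pow_zero_general (n : ℕ) (a : ℝ)
    (A : ℂ) (hA : A = -((1/2 + Complex.I * a) / (1/2 - Complex.I * a))) :
    (∑ ℓ ∈ Finset.range (2 * n + 1), A ^ ℓ = 0) ↔
      ((1/2 + Complex.I * a) ^ (2 * n + 1)).re = 0 := by
  set z : ℂ := 1/2 + Complex.I * a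
  have hz_re : z.re = 1/2 := by simp [z]
  have hz : z ≠ 0 := fun h => by norm_num [h] at hz_re
  have hconj : conj z = 1/2 - Complex.I * a := by simp [z, Complex.ext_iff]
  rw [← hconj] at hA
  have hA_ne_one : A ≠ 1 := by
    rw [hA, Ne, neg_eq_iff_eq_neg, Complex.div_conj_eq_neg_one_iff hz, hz_re]
    norm_num
  rw [geom_sum_eq_zero_iff_pow_eq_one hA_ne_one, hA, (odd_two_mul_add_one n).neg_div_conj_pow,
    neg_eq_iff_eq_neg, Complex.div_conj_eq_neg_one_iff (pow_ne_zero _ hz)]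

theorem geom_sum_zero_iff_re_pow_zero (n : ℕ) (hn : 1 ≤ n) (a : ℝ)
    (A : ℂ) (hA : A = -((1/2 + Complex.I * a) / (1/2 - Complex.I * a))) :
    (∑ ℓ ∈ Finset.range (2 * n + 1), A ^ ℓ = 0) ↔
      ((1/2 + Complex.I * a) ^ (2 * n + 1)).re = 0 :=
  geom_sum_zero_iff_re_pow_zero_general n a A hA
end

section
/- Let a > 0, t_a := 2√(1/4 + a²), and suppose w ∈ ℂ⁴ satisfies w₁w₂ + w₃w₄ = 1, |w₁|² + |w₂|² + |w₃|² + |w₄|² = 2t for some t with 1 < t < t_a. Then w₃w₄ ≠ 1/2 + ia. (Consequently the polynomial R_n does not vanish on M_t³ for t < t_n.) -/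
/-! If `w₃w₄ = 1/2 + ia` on the quadric, then `w₁w₂ = 1/2 - ia`, so both products have modulus
`√(1/4 + a²) = t_a / 2`. Since `2|xy| ≤ |x|² + |y|²`, this forces `2t = Σ|wᵢ|² ≥ 2 t_a`. -/

theorem two_mul_norm_mul_le_add_sq {R : Type*} [SeminormedRing R] (x y : R) :
    2 * ‖x * y‖ ≤ ‖x‖ ^ 2 + ‖y‖ ^ 2 :=
  calc 2 * ‖x * y‖ ≤ 2 * (‖x‖ * ‖y‖) := by gcongr; exact norm_mul_le x y
    _ = 2 * ‖x‖ * ‖y‖ := by ring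
    _ ≤ ‖x‖ ^ 2 + ‖y‖ ^ 2 := two_mul_le_add_sq _ _

theorem Complex.norm_half_add_I_mul (b : ℝ) : ‖(1 / 2 : ℂ) + I * b‖ = √(1 / 4 + b ^ 2) := by
  have h := Complex.norm_add_mul_I (1 / 2) b
  push_cast at h
  rw [mul_comm, h]
  norm_num

theorem R_nonvanishing_on_Mt_general (a t : ℝ)
    (ht2 : t < 2 * Real.sqrt (1/4 + a ^ 2))
    (w1 w2 w3 w4 : ℂ) (hq : w1 * w2 + w3 * w4 = 1)
    (hm : ‖w1‖ ^ 2 + ‖w2‖ ^ 2 + ‖w3‖ ^ 2 + ‖w4‖ ^ 2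
      = 2 * t) :
    w3 * w4 ≠ 1/2 + Complex.I * a := by
  intro h34
  have h12 : w1 * w2 = 1 / 2 + Complex.I * ((-a : ℝ) : ℂ) := by
    push_cast
    linear_combination hq - h34
  have h12_le := two_mul_norm_mul_le_add_sq w1 w2
  have h34_le := two_mul_norm_mul_le_add_sq w3 w4
  rw [h12, Complex.norm_half_add_I_mul, neg_sq] at h12_le
  rw [h34, Complex.norm_half_add_I_mul] at h34_le
  linarith

theorem R_nonvanishing_on_Mt (a t : ℝ) (ha : 0 < a) (ht1 : 1 < t)
    (ht2 : t < 2 * Real.sqrt (1/4 + a ^ 2))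
    (w1 w2 w3 w4 : ℂ) (hq : w1 * w2 + w3 * w4 = 1)
    (hm : ‖w1‖ ^ 2 + ‖w2‖ ^ 2 + ‖w3‖ ^ 2 + ‖w4‖ ^ 2
      = 2 * t) :
    w3 * w4 ≠ 1/2 + Complex.I * a :=
  R_nonvanishing_on_Mt_general a t ht2 w1 w2 w3 w4 hq hm
end

section
/- Let a > 0 and t ≥ 2√(1/4 + a²). Then there exists x₀ > 0 with x₀ + (1/4 + a²)/x₀ = t, and the point w = (√x₀, (1/2 - ia)/√x₀, √x₀, (1/2 + ia)/√x₀) satisfies w₁w₂ + w₃w₄ = 1 and |w₁|² + |w₂|² + |w₃|² + |w₄|² = 2t, and w₃w₄ = 1/2 + ia. -/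
/-! The equation `x + c / x = t` is the quadratic `x² - t x + c = 0`, whose discriminant
`t² - 4c` is nonnegative exactly when `t ≥ 2√c`; its larger root `x₀` is positive.
With `s = √x₀` the point `(s, (1/2 - ia)/s, s, (1/2 + ia)/s)` has `w₁w₂ + w₃w₄ = 1` since the
factors `s` cancel, and its squared norm is `2x₀ + 2|1/2 ± ia|²/x₀ = 2(x₀ + (1/4 + a²)/x₀) = 2t`. -/

open Complex

theorem exists_pos_add_div_eq {c t : ℝ} (hc : 0 < c) (ht : 2 * √c ≤ t) :
    ∃ x : ℝ, 0 < x ∧ x + c / x = t := by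
  have hdisc : 0 ≤ t ^ 2 - 4 * c := by
    nlinarith [Real.sq_sqrt hc.le, Real.sqrt_nonneg c]
  have hpos : 0 < t + √(t ^ 2 - 4 * c) := by
    have : 0 < t := lt_of_lt_of_le (by positivity) ht
    positivity
  refine ⟨(t + √(t ^ 2 - 4 * c)) / 2, by positivity, ?_⟩
  field_simp
  nlinarith [Real.sq_sqrt hdisc]

theorem norm_ofReal_sqrt_sq {x : ℝ} (hx : 0 ≤ x) : ‖((√x : ℝ) : ℂ)‖ ^ 2 = x := by
  rw [Complex.norm_of_nonneg (Real.sqrt_nonneg x), Real.sq_sqrt hx]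

theorem norm_div_ofReal_sqrt_sq (z : ℂ) {x : ℝ} (hx : 0 ≤ x) :
    ‖z / ((√x : ℝ) : ℂ)‖ ^ 2 = ‖z‖ ^ 2 / x := by
  rw [norm_div, div_pow, norm_ofReal_sqrt_sq hx]

theorem norm_half_add_I_mul_sq (a : ℝ) : ‖(1 / 2 + I * a : ℂ)‖ ^ 2 = 1 / 4 + a ^ 2 := by
  rw [show (1 / 2 + I * a : ℂ) = ((1 / 2 : ℝ) : ℂ) + a * I by push_cast; ring,
    Complex.sq_norm, normSq_add_mul_I]
  ring

theorem norm_half_sub_I_mul_sq (a : ℝ) : ‖(1 / 2 - I * a : ℂ)‖ ^ 2 = 1 / 4 + a ^ 2 := by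
  rw [show (1 / 2 - I * a : ℂ) = ((1 / 2 : ℝ) : ℂ) + ((-a : ℝ) : ℂ) * I by push_cast; ring,
    Complex.sq_norm, normSq_add_mul_I]
  ring

theorem degeneration_point_exists_general (a t : ℝ)
    (ht : t ≥ 2 * Real.sqrt (1/4 + a ^ 2)) :
    ∃ x0 : ℝ, 0 < x0 ∧ x0 + (1/4 + a ^ 2) / x0 = t ∧
      ((Real.sqrt x0 : ℂ) * ((1/2 - Complex.I * a) / Real.sqrt x0)
        + (Real.sqrt x0 : ℂ) * ((1/2 + Complex.I * a) / Real.sqrt x0) = 1) ∧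
      (‖(Real.sqrt x0 : ℂ)‖ ^ 2
        + ‖(1/2 - Complex.I * a) / (Real.sqrt x0 : ℂ)‖ ^ 2
        + ‖(Real.sqrt x0 : ℂ)‖ ^ 2
        + ‖(1/2 + Complex.I * a) / (Real.sqrt x0 : ℂ)‖ ^ 2 = 2 * t) ∧
      ((Real.sqrt x0 : ℂ) * ((1/2 + Complex.I * a) / Real.sqrt x0) = 1/2 + Complex.I * a) := by
  obtain ⟨x0, hx0, hsum⟩ := exists_pos_add_div_eq (by positivity) ht
  have hs : ((√x0 : ℝ) : ℂ) ≠ 0 := ofReal_ne_zero.2 (Real.sqrt_pos.2 hx0).ne'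
  refine ⟨x0, hx0, hsum, ?_, ?_, mul_div_cancel₀ _ hs⟩
  · rw [mul_div_cancel₀ _ hs, mul_div_cancel₀ _ hs]
    ring
  · rw [norm_div_ofReal_sqrt_sq _ hx0.le, norm_div_ofReal_sqrt_sq _ hx0.le,
      norm_ofReal_sqrt_sq hx0.le, norm_half_add_I_mul_sq, norm_half_sub_I_mul_sq]
    linarith

theorem degeneration_point_exists (a t : ℝ) (ha : 0 < a)
    (ht : t ≥ 2 * Real.sqrt (1/4 + a ^ 2)) :
    ∃ x0 : ℝ, 0 < x0 ∧ x0 + (1/4 + a ^ 2) / x0 = t ∧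
      ((Real.sqrt x0 : ℂ) * ((1/2 - Complex.I * a) / Real.sqrt x0)
        + (Real.sqrt x0 : ℂ) * ((1/2 + Complex.I * a) / Real.sqrt x0) = 1) ∧
      (‖(Real.sqrt x0 : ℂ)‖ ^ 2
        + ‖(1/2 - Complex.I * a) / (Real.sqrt x0 : ℂ)‖ ^ 2
        + ‖(Real.sqrt x0 : ℂ)‖ ^ 2
        + ‖(1/2 + Complex.I * a) / (Real.sqrt x0 : ℂ)‖ ^ 2 = 2 * t) ∧
      ((Real.sqrt x0 : ℂ) * ((1/2 + Complex.I * a) / Real.sqrt x0) = 1/2 + Complex.I * a) :=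
  degeneration_point_exists_general a t ht
end

section
/- For every real t ≥ √2, there exists u ≠ 0 real with 2u² + 1/u² = 2t, and the two distinct points w = (u, 1/u, u, 0) and w' = (u, 0, u, 1/u) both lie on M_t³ (i.e., satisfy w₁w₂ + w₃w₄ = 1 and |w₁|²+|w₂|²+|w₃|²+|w₄|² = 2t) and satisfy P_n(w) = P_n(w') = 0 for every n, where P_n(w) = ∑_{k=1}^{2n} α_k w₁^{2n-k} w₂^{2n-k+1} w₃^{k-1} w₄^{k} for any coefficients α_k ∈ ℂ. -/
/-!
Take `u > 0` with `u² = (t + √(t² - 2)) / 2`, a root of `2x² - 2tx + 1`, which is real exactly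
when `t ≥ √2`; then `2u² + 1/u² = 2t`. Both points lie on `M_t³` by direct computation, and every
monomial of `P_n` contains `w₂` and `w₄`, one of which vanishes at each point.
-/

open Finset

lemma exists_pos_two_mul_sq_add_one_div_sq_eq {t : ℝ} (ht : √2 ≤ t) :
    ∃ u : ℝ, 0 < u ∧ 2 * u ^ 2 + 1 / u ^ 2 = 2 * t := by
  have ht_pos : 0 < t := (Real.sqrt_pos.mpr two_pos).trans_le ht
  have hdisc : 0 ≤ t ^ 2 - 2 := by
    nlinarith [Real.sq_sqrt zero_le_two, Real.sqrt_nonneg 2]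
  set x := (t + √(t ^ 2 - 2)) / 2
  have hx : 0 < x := by positivity
  refine ⟨√x, Real.sqrt_pos.mpr hx, ?_⟩
  rw [Real.sq_sqrt hx.le]
  field_simp
  linear_combination (1 / 2) * Real.sq_sqrt hdisc

section MonomialSum

variable {R : Type*} [CommSemiring R]

/-- The polynomial `P_n(w)` with coefficients `α`. -/
def monomialSum (n : ℕ) (α : ℕ → R) (w₁ w₂ w₃ w₄ : R) : R :=
  ∑ k ∈ Icc 1 (2 * n), α k * w₁ ^ (2 * n - k) * w₂ ^ (2 * n - k + 1) * w₃ ^ (k - 1) * w₄ ^ k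

lemma monomialSum_of_second_eq_zero (n : ℕ) (α : ℕ → R) (w₁ w₃ w₄ : R) :
    monomialSum n α w₁ 0 w₃ w₄ = 0 :=
  sum_eq_zero fun k _ => by simp

lemma monomialSum_of_fourth_eq_zero (n : ℕ) (α : ℕ → R) (w₁ w₂ w₃ : R) :
    monomialSum n α w₁ w₂ w₃ 0 = 0 :=
  sum_eq_zero fun k hk => by rw [zero_pow (by grind), mul_zero]

end MonomialSum

lemma norm_ofReal_sq (u : ℝ) : ‖(u : ℂ)‖ ^ 2 = u ^ 2 := by
  rw [Complex.norm_real, Real.norm_eq_abs, sq_abs]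

theorem noninjectivity_points (t : ℝ) (ht : t ≥ Real.sqrt 2) :
    ∃ u : ℝ, u ≠ 0 ∧ 2 * u ^ 2 + 1 / u ^ 2 = 2 * t ∧
      (((u : ℂ), (1/u : ℂ), (u : ℂ), (0 : ℂ)) ≠ ((u : ℂ), (0 : ℂ), (u : ℂ), (1/u : ℂ))) ∧
      ((u : ℂ) * (1/u : ℂ) + (u : ℂ) * 0 = 1) ∧
      (‖(u : ℂ)‖ ^ 2 + ‖(1/u : ℂ)‖ ^ 2 + ‖(u : ℂ)‖ ^ 2
        + ‖(0 : ℂ)‖ ^ 2 = 2 * t) ∧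
      ((u : ℂ) * (0 : ℂ) + (u : ℂ) * (1/u : ℂ) = 1) ∧
      (‖(u : ℂ)‖ ^ 2 + ‖(0 : ℂ)‖ ^ 2 + ‖(u : ℂ)‖ ^ 2
        + ‖(1/u : ℂ)‖ ^ 2 = 2 * t) ∧
      (∀ n : ℕ, 1 ≤ n → ∀ α : ℕ → ℂ,
        (∑ k ∈ Finset.Icc 1 (2 * n),
          α k * (u : ℂ) ^ (2 * n - k) * (1/u : ℂ) ^ (2 * n - k + 1)
            * (u : ℂ) ^ (k - 1) * (0 : ℂ) ^ k) = 0 ∧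
        (∑ k ∈ Finset.Icc 1 (2 * n),
          α k * (u : ℂ) ^ (2 * n - k) * (0 : ℂ) ^ (2 * n - k + 1)
            * (u : ℂ) ^ (k - 1) * (1/u : ℂ) ^ k) = 0) := by
  obtain ⟨u, hu, hut⟩ := exists_pos_two_mul_sq_add_one_div_sq_eq ht
  have hu' : (u : ℂ) ≠ 0 := Complex.ofReal_ne_zero.mpr hu.ne'
  have hinv : (u : ℂ) * (1 / u) = 1 := mul_one_div_cancel hu'
  have hnorm_inv : ‖(1 / u : ℂ)‖ ^ 2 = 1 / u ^ 2 := by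
    rw [← Complex.ofReal_one, ← Complex.ofReal_div, norm_ofReal_sq, div_pow, one_pow]
  refine ⟨u, hu.ne', hut, fun h => one_div_ne_zero hu' (congrArg (·.2.1) h),
    by rw [hinv, mul_zero, add_zero], ?_, by rw [hinv, mul_zero, zero_add], ?_, fun n _ α =>
    ⟨monomialSum_of_fourth_eq_zero n α _ _ _, monomialSum_of_second_eq_zero n α _ _ _⟩⟩
  all_goals rw [norm_ofReal_sq, hnorm_inv, norm_zero]; linear_combination hut
end

section
/- Let w, ŵ ∈ ℂ⁴ lie on the quadric w₁w₂ + w₃w₄ = 1, with w₁ = ŵ₁, w₃ = ŵ₃, and P₁(w) = P₁(ŵ), where P₁(w) = -(1/6 + i/(2√3)) w₁w₂²w₄ + (1/6 - i/(2√3)) w₂w₃w₄². If w₁ = 0 or w₃ = 0, then w = ŵ. -/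
/-! Write `c± = 1/6 ± i/(2√3)`; both are nonzero, having real part `1/6`. On the axis `w₁ = 0` the
quadric reads `w₃w₄ = 1`, so `w₄` is determined by `w₃`, and `P₁ = c₋ w₃ w₄² · w₂` is linear in `w₂`
with a nonzero coefficient; hence `w₂` is determined as well. The axis `w₃ = 0` is symmetric, with
`P₁ = -c₊ w₁ w₂² · w₄`. -/

noncomputable def P1 (w1 w2 w3 w4 : ℂ) : ℂ :=
  -(1/6 + Complex.I / (2 * Real.sqrt 3)) * w1 * w2 ^ 2 * w4
    + (1/6 - Complex.I / (2 * Real.sqrt 3)) * w2 * w3 * w4 ^ 2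

open Complex

lemma one_sixth_add_I_div_ne_zero (r : ℝ) : (1/6 + I / (2 * r) : ℂ) ≠ 0 := by
  intro h
  simpa [div_re] using congrArg re h

lemma one_sixth_sub_I_div_ne_zero (r : ℝ) : (1/6 - I / (2 * r) : ℂ) ≠ 0 := by
  intro h
  simpa [div_re] using congrArg re h

lemma P1_of_w1_eq_zero (w2 w3 w4 : ℂ) :
    P1 0 w2 w3 w4 = (1/6 - I / (2 * Real.sqrt 3)) * w3 * w4 ^ 2 * w2 := by
  unfold P1; ring

lemma P1_of_w3_eq_zero (w1 w2 w4 : ℂ) :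
    P1 w1 w2 0 w4 = -(1/6 + I / (2 * Real.sqrt 3)) * w1 * w2 ^ 2 * w4 := by
  unfold P1; ring

lemma fiber_trivial_of_w1_eq_zero {w2 w3 w4 v2 v4 : ℂ}
    (hq : w3 * w4 = 1) (hq' : w3 * v4 = 1) (hP : P1 0 w2 w3 w4 = P1 0 v2 w3 v4) :
    v2 = w2 ∧ v4 = w4 := by
  have hv4 : v4 = w4 := (left_inv_eq_right_inv (mul_comm w4 w3 ▸ hq) hq').symm
  subst hv4
  have hcoeff : (1/6 - I / (2 * Real.sqrt 3)) * w3 * v4 ^ 2 ≠ 0 :=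
    mul_ne_zero (mul_ne_zero (one_sixth_sub_I_div_ne_zero _) (left_ne_zero_of_mul_eq_one hq))
      (pow_ne_zero _ (right_ne_zero_of_mul_eq_one hq))
  rw [P1_of_w1_eq_zero, P1_of_w1_eq_zero] at hP
  exact ⟨(mul_left_cancel₀ hcoeff hP).symm, rfl⟩

lemma fiber_trivial_of_w3_eq_zero {w1 w2 w4 v2 v4 : ℂ}
    (hq : w1 * w2 = 1) (hq' : w1 * v2 = 1) (hP : P1 w1 w2 0 w4 = P1 w1 v2 0 v4) :
    v2 = w2 ∧ v4 = w4 := by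
  have hv2 : v2 = w2 := (left_inv_eq_right_inv (mul_comm w2 w1 ▸ hq) hq').symm
  subst hv2
  have hcoeff : -(1/6 + I / (2 * Real.sqrt 3)) * w1 * v2 ^ 2 ≠ 0 :=
    mul_ne_zero (mul_ne_zero (neg_ne_zero.mpr (one_sixth_add_I_div_ne_zero _))
      (left_ne_zero_of_mul_eq_one hq)) (pow_ne_zero _ (right_ne_zero_of_mul_eq_one hq))
  rw [P1_of_w3_eq_zero, P1_of_w3_eq_zero] at hP
  exact ⟨rfl, (mul_left_cancel₀ hcoeff hP).symm⟩

theorem fiber_trivial_on_axes (w1 w2 w3 w4 v2 v4 : ℂ)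
    (hq : w1 * w2 + w3 * w4 = 1) (hq' : w1 * v2 + w3 * v4 = 1)
    (hP : P1 w1 w2 w3 w4 = P1 w1 v2 w3 v4)
    (hzero : w1 = 0 ∨ w3 = 0) :
    v2 = w2 ∧ v4 = w4 := by
  rcases hzero with rfl | rfl
  · rw [zero_mul, zero_add] at hq hq'
    exact fiber_trivial_of_w1_eq_zero hq hq' hP
  · rw [zero_mul, add_zero] at hq hq'
    exact fiber_trivial_of_w3_eq_zero hq hq' hP
end

section
/- Let w, ŵ ∈ ℂ⁴ lie on the quadric w₁w₂ + w₃w₄ = 1 with w₁ = ŵ₁ ≠ 0, w₃ = ŵ₃ ≠ 0, and P₁(w) = P₁(ŵ) for P₁ as above. Then either ŵ₄ = w₄ (hence ŵ = w), or ŵ₄ = -((1 + i√3)/(2w₃))(w₃w₄ - 1), or ŵ₄ = -((1 - i√3)/(2w₃))(w₃w₄ - (1 + i√3)/2). -/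
/-! With `ω = (1 + i√3)/2`, a primitive sixth root of unity, the coefficients of `P₁` are `ω/3` and
`ω̄/3 = (1 - ω)/3`. Hence `3 w₁ w₃ P₁(w)` depends only on `x = w₃ w₄` once `w₁ w₂ = 1 - x`: it is a
cubic `c(x)`. The fiber `c(x) = c(y)` is `y = x` together with the two roots of the quotient
quadratic, which splits over `ℤ[ω]` as `(y + ω (x - 1)) (y + (1 - ω) (x - ω))`. -/

section SixthRoot

variable {R : Type*} [CommRing R] (ω : R)

def quadricCubic (x : R) : R :=
  -ω * (1 - x) ^ 2 * x + (1 - ω) * (1 - x) * x ^ 2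

variable {ω}

theorem quadricCubic_sub_quadricCubic (hω : ω ^ 2 - ω + 1 = 0) (x y : R) :
    quadricCubic ω x - quadricCubic ω y
      = -((x - y) * (y + ω * (x - 1)) * (y + (1 - ω) * (x - ω))) := by
  unfold quadricCubic
  linear_combination (x - y) * (y - x ^ 2 + (1 + ω) * x - ω) * hω

theorem eq_or_eq_or_eq_of_quadricCubic_eq [NoZeroDivisors R] (hω : ω ^ 2 - ω + 1 = 0) {x y : R}
    (h : quadricCubic ω x = quadricCubic ω y) :
    y = x ∨ y = -ω * (x - 1) ∨ y = -(1 - ω) * (x - ω) := by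
  have hprod : (x - y) * (y + ω * (x - 1)) * (y + (1 - ω) * (x - ω)) = 0 := by
    rw [← neg_eq_zero, ← quadricCubic_sub_quadricCubic hω, sub_eq_zero, h]
  rcases mul_eq_zero.mp hprod with hfirstTwo | hthird
  · rcases mul_eq_zero.mp hfirstTwo with hfirst | hsecond
    · exact .inl (sub_eq_zero.mp hfirst).symm
    · exact .inr (.inl (by linear_combination hsecond))
  · exact .inr (.inr (by linear_combination hthird))

end SixthRoot

noncomputable def sixthRootOfUnity : ℂ := (1 + Complex.I * Real.sqrt 3) / 2

local notation "ω" => sixthRootOfUnity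

theorem ofReal_sqrt_three_sq : (Real.sqrt 3 : ℂ) ^ 2 = 3 := by
  exact_mod_cast Real.sq_sqrt (by norm_num : (0 : ℝ) ≤ 3)

theorem sixthRootOfUnity_sq_sub_self_add_one : ω ^ 2 - ω + 1 = 0 := by
  unfold sixthRootOfUnity
  linear_combination
    (1 / 4 : ℂ) * Complex.I ^ 2 * ofReal_sqrt_three_sq + (3 / 4 : ℂ) * Complex.I_sq

theorem three_mul_mul_P1 (w1 w2 w3 w4 : ℂ) :
    3 * w1 * w3 * P1 w1 w2 w3 w4
      = -ω * (w1 * w2) ^ 2 * (w3 * w4) + (1 - ω) * (w1 * w2) * (w3 * w4) ^ 2 := by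
  have hs0 : (Real.sqrt 3 : ℂ) ≠ 0 := by exact_mod_cast (by positivity : Real.sqrt 3 ≠ 0)
  have hcoeff : Complex.I / (2 * Real.sqrt 3) = Complex.I * Real.sqrt 3 / 6 := by
    field_simp
    linear_combination (-2 : ℂ) * ofReal_sqrt_three_sq
  unfold P1 sixthRootOfUnity
  rw [hcoeff]
  ring

theorem three_mul_mul_P1_of_quadric {w1 w2 w3 w4 : ℂ} (hq : w1 * w2 + w3 * w4 = 1) :
    3 * w1 * w3 * P1 w1 w2 w3 w4 = quadricCubic ω (w3 * w4) := by
  rw [three_mul_mul_P1, quadricCubic, ← eq_sub_of_add_eq hq]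

theorem fiber_structure (w1 w2 w3 w4 v2 v4 : ℂ)
    (h1 : w1 ≠ 0) (h3 : w3 ≠ 0)
    (hq : w1 * w2 + w3 * w4 = 1) (hq' : w1 * v2 + w3 * v4 = 1)
    (hP : P1 w1 w2 w3 w4 = P1 w1 v2 w3 v4) :
    (v4 = w4 ∧ v2 = w2) ∨
    v4 = -((1 + Complex.I * Real.sqrt 3) / (2 * w3)) * (w3 * w4 - 1) ∨
    v4 = -((1 - Complex.I * Real.sqrt 3) / (2 * w3))
      * (w3 * w4 - (1 + Complex.I * Real.sqrt 3) / 2) := by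
  have hcubic : quadricCubic ω (w3 * w4) = quadricCubic ω (w3 * v4) := by
    rw [← three_mul_mul_P1_of_quadric hq, ← three_mul_mul_P1_of_quadric hq', hP]
  rcases eq_or_eq_or_eq_of_quadricCubic_eq sixthRootOfUnity_sq_sub_self_add_one hcubic with
    hsame | hsecond | hthird
  · have h4 : v4 = w4 := mul_left_cancel₀ h3 hsame
    refine .inl ⟨h4, mul_left_cancel₀ h1 ?_⟩
    linear_combination hq' - hq - w3 * h4
  · refine .inr (.inl (mul_left_cancel₀ h3 ?_))
    rw [hsecond, sixthRootOfUnity]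
    field_simp
  · refine .inr (.inr (mul_left_cancel₀ h3 ?_))
    rw [hthird, sixthRootOfUnity]
    field_simp
    ring
end

section
/- Neither the line {b ∈ ℂ : 2 Re(b) - 1 = 0} nor the line {b ∈ ℂ : Re(b) - √3 Im(b) = 0} intersects the open set 𝒟 = ℰ₁ ∩ ℰ₂, where ℰ₁ = {z ∈ ℂ : |z - 1| + |z| < √5/2} and ℰ₂ = {z ∈ ℂ : |z - 1| + |z - (1 + i√3)/2| < √5/2}. -/
/-!
The line `2 Re b = 1` is the perpendicular bisector of the foci `0, 1` of `ℰ₁`, and the line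
`Re b = √3 Im b` is that of the foci `1, ω` of `ℰ₂`, where `ω = (1 + i√3)/2`; the three foci
form an equilateral triangle of side `1`. So both cases are one statement about a unit equilateral
triangle `p q r` and a point `b` with `|b - p| = |b - q|` inside the ellipse with foci `p, q`.
With `m` the midpoint of `pq` and `s = |b - m|`, Apollonius gives `|b - q|² = s² + 1/4` and
`|r - m| = √3/2`, and being inside the ellipse means `s < 1/4`. Then
`|b - q| - s ≥ (√5 - 1)/4` and `|b - r| ≥ √3/2 - s`, whose sum is at least `√5/2`
because `√5 + 1 ≤ 2√3`: so `b` lies outside the ellipse with foci `q, r`.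
-/

open EuclideanGeometry Complex

theorem dist_sq_eq_dist_midpoint_sq_add_of_dist_eq {V P : Type*} [NormedAddCommGroup V]
    [InnerProductSpace ℝ V] [MetricSpace P] [NormedAddTorsor V P] {a b c : P}
    (h : dist a b = dist a c) :
    dist a c ^ 2 = dist a (midpoint ℝ b c) ^ 2 + (dist b c / 2) ^ 2 := by
  have := dist_sq_add_dist_sq_eq_two_mul_dist_midpoint_sq_add_half_dist_sq a b c
  rw [h] at this
  linarith

theorem sqrt_five_add_one_le_two_mul_sqrt_three : √5 + 1 ≤ 2 * √3 := by
  have h5 : √5 ^ 2 = 5 := Real.sq_sqrt (by norm_num)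
  have h3 : √3 ^ 2 = 3 := Real.sq_sqrt (by norm_num)
  have h5_le : √5 ≤ 3 := by nlinarith [Real.sqrt_nonneg 5]
  nlinarith [Real.sqrt_nonneg 5, Real.sqrt_nonneg 3]

theorem sqrt_five_div_two_le_dist_add_dist {V P : Type*} [NormedAddCommGroup V]
    [InnerProductSpace ℝ V] [MetricSpace P] [NormedAddTorsor V P] {p q r b : P}
    (hpq : dist p q = 1) (hrp : dist r p = 1) (hrq : dist r q = 1) (hb : dist b p = dist b q)
    (hlt : dist b p + dist b q < √5 / 2) : √5 / 2 ≤ dist b q + dist b r := by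
  have hbq := dist_sq_eq_dist_midpoint_sq_add_of_dist_eq hb
  have hrm_sq := dist_sq_eq_dist_midpoint_sq_add_of_dist_eq (hrp.trans hrq.symm)
  set m := midpoint ℝ p q
  rw [hpq] at hbq hrm_sq
  rw [hrq] at hrm_sq
  have h3 : √3 ^ 2 = 3 := Real.sq_sqrt (by norm_num)
  have h5 : √5 ^ 2 = 5 := Real.sq_sqrt (by norm_num)
  have hrm : dist r m = √3 / 2 :=
    (sq_eq_sq₀ dist_nonneg (by positivity)).1 (by rw [div_pow, h3]; linarith)
  have hbr : √3 / 2 - dist b m ≤ dist b r := by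
    linarith [dist_triangle r b m, dist_comm r b]
  have hq : dist b q < √5 / 4 := by linarith
  have hm : dist b m < 1 / 4 := by
    nlinarith [dist_nonneg (x := b) (y := q), dist_nonneg (x := b) (y := m)]
  have hmq : dist b m < dist b q := by
    nlinarith [dist_nonneg (x := b) (y := q), dist_nonneg (x := b) (y := m)]
  -- `(dist b q - dist b m) * (dist b q + dist b m) = 1 / 4`, the second factor is `< (√5 + 1) / 4`
  have hfoci : (√5 - 1) / 4 ≤ dist b q - dist b m := by
    nlinarith [mul_le_mul_of_nonneg_left (add_lt_add hq hm).le (sub_nonneg.2 hmq.le)]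
  linarith [sqrt_five_add_one_le_two_mul_sqrt_three]

theorem lines_miss_D (b : ℂ)
    (h1 : ‖b - 1‖ + ‖b‖ < Real.sqrt 5 / 2)
    (h2 : ‖b - 1‖ + ‖b - (1 + Complex.I * Real.sqrt 3) / 2‖
      < Real.sqrt 5 / 2) :
    2 * b.re - 1 ≠ 0 ∧ b.re - Real.sqrt 3 * b.im ≠ 0 := by
  set ω : ℂ := (1 + I * √3) / 2
  have h3 : √3 ^ 2 = 3 := Real.sq_sqrt (by norm_num)
  have hω_re : ω.re = 1 / 2 := by simp [ω]
  have hω_im : ω.im = √3 / 2 := by simp [ω]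
  have h01 : dist (0 : ℂ) 1 = 1 := by simp
  have hω0 : dist ω 0 = 1 := by rw [dist_eq_re_im, hω_re, hω_im]; norm_num [div_pow, h3]
  have hω1 : dist ω 1 = 1 := by rw [dist_eq_re_im, hω_re, hω_im]; norm_num [div_pow, h3]
  rw [← dist_eq b 1, ← dist_zero_right b] at h1
  rw [← dist_eq, ← dist_eq] at h2
  constructor
  · intro hre
    have hb : dist b 0 = dist b 1 := by
      rw [dist_eq_re_im, dist_eq_re_im]
      congr 1
      simp only [zero_re, zero_im, one_re, one_im]
      linear_combination hre
    linarith [sqrt_five_div_two_le_dist_add_dist h01 hω0 hω1 hb (by linarith)]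
  · intro hre
    have hb : dist b ω = dist b 1 := by
      rw [dist_eq_re_im, dist_eq_re_im, hω_re, hω_im]
      congr 1
      simp only [one_re, one_im]
      linear_combination hre + h3 / 4
    linarith [sqrt_five_div_two_le_dist_add_dist hω1 (by rwa [dist_comm]) h01 hb (by linarith)]
end

section
/- Define φ(b) = ((b₁ - √3 b₂)/(2b₁ - 1) + 1) · (|b - 1|²(2b₁ - 1)/(b₁ - √3 b₂) + |b|²) for b ∈ ℂ with b₁ = Re(b), b₂ = Im(b). Then φ(b) ≥ 5/4 for all b in 𝒟 = ℰ₁ ∩ ℰ₂, where ℰ₁ = {z : |z-1| + |z| < √5/2} and ℰ₂ = {z : |z-1| + |z - (1+i√3)/2| < √5/2}. -/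
/-!
The reflection fixing `1` and swapping `0` with `ω = (1 + i√3)/2` exchanges the two ellipses, so
`𝒟` is invariant under it. It also exchanges the perpendicular bisectors `ℓ₁ = 0` of `[0, 1]` and
`ℓ₂ = 0` of `[1, ω]`. Bounding each distance below by a linear form shows that
`2|b - 1| + |b| + |b - ω| > √5` on the half-plane `ℓ₁ ≤ 0`, so `𝒟` lies in `ℓ₁ > 0`, hence by the
symmetry in the wedge `ℓ₁ > 0, ℓ₂ > 0`. On that wedge `48 ℓ₁ ℓ₂ (φ - 5/4)` is an explicit sum of
nonnegative terms.
-/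

open Real Complex

local notation "ω" => ((1 + I * √3) / 2 : ℂ)

lemma ω_re : (ω).re = 1 / 2 := by simp

lemma ω_im : (ω).im = √3 / 2 := by simp

lemma sq_sqrt_three : √3 ^ 2 = 3 := Real.sq_sqrt (by norm_num)

lemma sq_norm_eq_re_sq_add_im_sq (z : ℂ) : ‖z‖ ^ 2 = z.re ^ 2 + z.im ^ 2 := by
  rw [Complex.sq_norm, normSq_apply]; ring

lemma norm_eq_norm_of_re_sq_add_im_sq_eq {z w : ℂ}
    (h : z.re ^ 2 + z.im ^ 2 = w.re ^ 2 + w.im ^ 2) : ‖z‖ = ‖w‖ := by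
  rw [norm_eq_sqrt_sq_add_sq, norm_eq_sqrt_sq_add_sq, h]

lemma mul_re_add_mul_im_le_norm (z : ℂ) {c₁ c₂ : ℝ} (hc : c₁ ^ 2 + c₂ ^ 2 ≤ 1) :
    c₁ * z.re + c₂ * z.im ≤ ‖z‖ := by
  have := sq_norm_eq_re_sq_add_im_sq z
  nlinarith [sq_nonneg (c₁ * z.im - c₂ * z.re), norm_nonneg z,
    sq_nonneg (c₁ * z.re + c₂ * z.im - ‖z‖)]

/-- The reflection fixing `1` and swapping `0` and `ω`. -/
noncomputable def mirror (b : ℂ) : ℂ :=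
  ⟨(b.re - √3 * b.im + 1) / 2, (√3 * (1 - b.re) - b.im) / 2⟩

lemma norm_mirror_sub_one (b : ℂ) : ‖mirror b - 1‖ = ‖b - 1‖ := by
  apply norm_eq_norm_of_re_sq_add_im_sq_eq
  simp only [mirror, sub_re, one_re, sub_im, one_im, sub_zero]
  linear_combination (((b.re - 1) ^ 2 + b.im ^ 2) / 4) * sq_sqrt_three

lemma norm_mirror (b : ℂ) : ‖mirror b‖ = ‖b - ω‖ := by
  apply norm_eq_norm_of_re_sq_add_im_sq_eq
  simp only [mirror, sub_re, sub_im, ω_re, ω_im]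
  linear_combination ((b.re ^ 2 + b.im ^ 2 - 2 * b.re) / 4) * sq_sqrt_three

lemma norm_mirror_sub (b : ℂ) : ‖mirror b - ω‖ = ‖b‖ := by
  apply norm_eq_norm_of_re_sq_add_im_sq_eq
  simp only [mirror, sub_re, sub_im, ω_re, ω_im]
  linear_combination ((b.re ^ 2 + b.im ^ 2) / 4) * sq_sqrt_three

noncomputable def ℓ₁ (b : ℂ) : ℝ := 2 * b.re - 1

noncomputable def ℓ₂ (b : ℂ) : ℝ := b.re - √3 * b.im

lemma ℓ₁_mirror (b : ℂ) : ℓ₁ (mirror b) = ℓ₂ b := by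
  simp only [ℓ₁, ℓ₂, mirror]; ring

lemma ℓ₁_pos_of_mem_ellipses {b : ℂ} (h₁ : ‖b - 1‖ + ‖b‖ < √5 / 2)
    (h₂ : ‖b - 1‖ + ‖b - ω‖ < √5 / 2) : 0 < ℓ₁ b := by
  by_contra! hℓ₁
  rw [ℓ₁] at hℓ₁
  -- the `im` parts cancel in `2 e₁ + e₂ + e₃`, leaving `2‖b - 1‖ + ‖b‖ + ‖b - ω‖ ≥ 24/17 + √3/2`
  have e₁ := mul_re_add_mul_im_le_norm (b - 1) (c₁ := -16 / 17) (c₂ := 1 / 3) (by norm_num)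
  have e₂ := mul_re_add_mul_im_le_norm b (c₁ := 16 / 17) (c₂ := 1 / 3) (by norm_num)
  have e₃ := mul_re_add_mul_im_le_norm (b - ω) (c₁ := 0) (c₂ := -1) (by norm_num)
  have hs : 433 / 250 ≤ √3 := Real.le_sqrt_of_sq_le (by norm_num)
  have ht : √5 ≤ 2237 / 1000 := (Real.sqrt_le_left (by norm_num)).2 (by norm_num)
  simp only [sub_re, sub_im, one_re, one_im, ω_re, ω_im] at e₁ e₃
  linarith

lemma ℓ₂_pos_of_mem_ellipses {b : ℂ} (h₁ : ‖b - 1‖ + ‖b‖ < √5 / 2)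
    (h₂ : ‖b - 1‖ + ‖b - ω‖ < √5 / 2) : 0 < ℓ₂ b := by
  rw [← ℓ₁_mirror]
  apply ℓ₁_pos_of_mem_ellipses
  · rw [norm_mirror_sub_one, norm_mirror]; exact h₂
  · rw [norm_mirror_sub_one, norm_mirror_sub]; exact h₁

noncomputable def phi (b : ℂ) : ℝ :=
  (ℓ₂ b / ℓ₁ b + 1) * (‖b - 1‖ ^ 2 * ℓ₁ b / ℓ₂ b + ‖b‖ ^ 2)

lemma phi_sub_five_fourths {b : ℂ} (h₁ : ℓ₁ b ≠ 0) (h₂ : ℓ₂ b ≠ 0) :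
    phi b - 5 / 4 = (ℓ₁ b * ℓ₂ b * (4 * ℓ₁ b + 4 * ℓ₂ b - 2) ^ 2 +
      16 * (ℓ₁ b - ℓ₂ b) ^ 2 * ((ℓ₁ b + ℓ₂ b - 1 / 2) ^ 2 + 3 / 4)) / (48 * (ℓ₁ b * ℓ₂ b)) := by
  have key : 12 * (4 * ((ℓ₁ b + ℓ₂ b) * (‖b - 1‖ ^ 2 * ℓ₁ b + ‖b‖ ^ 2 * ℓ₂ b))
      - 5 * (ℓ₁ b * ℓ₂ b)) = ℓ₁ b * ℓ₂ b * (4 * ℓ₁ b + 4 * ℓ₂ b - 2) ^ 2 +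
        16 * (ℓ₁ b - ℓ₂ b) ^ 2 * ((ℓ₁ b + ℓ₂ b - 1 / 2) ^ 2 + 3 / 4) := by
    simp only [ℓ₁, ℓ₂, sq_norm_eq_re_sq_add_im_sq, sub_re, one_re, sub_im, one_im]
    linear_combination (-16 * b.im ^ 4 * √3 ^ 2 + 96 * b.re * b.im ^ 3 * √3
      - 32 * b.im ^ 3 * √3 - 144 * b.re ^ 2 * b.im ^ 2 + 96 * b.re * b.im ^ 2
      - 16 * b.im ^ 2) * sq_sqrt_three
  rw [phi]
  field_simp
  linear_combination 16 * key

lemma five_fourths_le_phi {b : ℂ} (h₁ : 0 < ℓ₁ b) (h₂ : 0 < ℓ₂ b) : 5 / 4 ≤ phi b := by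
  have hprod := mul_pos h₁ h₂
  have hsos : 0 ≤ (ℓ₁ b * ℓ₂ b * (4 * ℓ₁ b + 4 * ℓ₂ b - 2) ^ 2 +
      16 * (ℓ₁ b - ℓ₂ b) ^ 2 * ((ℓ₁ b + ℓ₂ b - 1 / 2) ^ 2 + 3 / 4)) / (48 * (ℓ₁ b * ℓ₂ b)) := by
    positivity
  linarith [phi_sub_five_fourths h₁.ne' h₂.ne']

theorem phi_ge_on_D (b : ℂ)
    (h1 : ‖b - 1‖ + ‖b‖ < Real.sqrt 5 / 2)
    (h2 : ‖b - 1‖ + ‖b - (1 + Complex.I * Real.sqrt 3) / 2‖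
      < Real.sqrt 5 / 2) :
    ((b.re - Real.sqrt 3 * b.im) / (2 * b.re - 1) + 1) *
      (‖b - 1‖ ^ 2 * (2 * b.re - 1) / (b.re - Real.sqrt 3 * b.im)
        + ‖b‖ ^ 2) ≥ 5 / 4 :=
  five_fourths_le_phi (ℓ₁_pos_of_mem_ellipses h1 h2) (ℓ₂_pos_of_mem_ellipses h1 h2)
end
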